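/- arXiv:1109.1990 — 2 statements merged into one kernel-verified Lean document; each statement's English description precedes it below -/
import Mathlib

section
/- Let P ∈ R^{k×p} have columns of unit ℓ2-norm. Then for all w ∈ R^p, ‖w‖_2 ≤ ‖P·Diag(w)‖_* ≤ ‖w‖_1. -/
/-!
Write `B = √(MᴴM)` for `M = P · Diag(w)`, so that `‖M‖_* = tr B` and `B² = MᴴM`, whose diagonal
entries are `w_i²` because the columns of `P` are unit vectors. For the lower bound,
`‖w‖₂² = tr B² = ∑_{ij} B_ij² ≤ ∑_{ij} B_ii B_jj = (tr B)²`, the middle step being the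
nonnegativity of the `2 × 2` principal minors of the positive semidefinite `B`. For the upper
bound, `B_ii² ≤ (B²)_ii = w_i²` for each `i`, and summing gives `tr B ≤ ‖w‖₁`.
-/

noncomputable def traceNorm {n p : ℕ} (M : Matrix (Fin n) (Fin p) ℝ) : ℝ :=
  ((Matrix.posSemidef_conjTranspose_mul_self M).1.eigenvectorUnitary.1 *
    Matrix.diagonal (Real.sqrt ∘ (Matrix.posSemidef_conjTranspose_mul_self M).1.eigenvalues) *
    (star (Matrix.posSemidef_conjTranspose_mul_self M).1.eigenvectorUnitary :
      Matrix (Fin p) (Fin p) ℝ)).trace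

open scoped MatrixOrder

namespace Matrix

variable {m n : Type*} [Fintype m]

lemma conjTranspose_mul_self_apply_self (M : Matrix m n ℝ) (i : n) :
    (Mᴴ * M) i i = ∑ j, M j i ^ 2 := by
  simp only [mul_apply, conjTranspose_apply, star_trivial, sq]

lemma PosSemidef.sq_apply_le_mul_apply {B : Matrix n n ℝ} (hB : B.PosSemidef) (i j : n) :
    B i j ^ 2 ≤ B i i * B j j := by
  have hdet := (hB.submatrix ![i, j]).det_nonneg
  rw [det_fin_two] at hdet
  simp only [submatrix_apply, cons_val_zero, cons_val_one] at hdet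
  have hsymm : B j i = B i j := by simpa using hB.1.apply i j
  rw [hsymm] at hdet
  nlinarith

variable [Fintype n]

lemma IsHermitian.mul_self_apply_self {B : Matrix n n ℝ} (hB : B.IsHermitian) (i : n) :
    (B * B) i i = ∑ j, B i j ^ 2 := by
  simp only [mul_apply, sq]
  refine Finset.sum_congr rfl fun j _ ↦ ?_
  rw [← hB.apply j i, star_trivial]

lemma IsHermitian.sq_apply_le_mul_self_apply {B : Matrix n n ℝ} (hB : B.IsHermitian) (i : n) :
    B i i ^ 2 ≤ (B * B) i i := by
  rw [hB.mul_self_apply_self]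
  exact Finset.single_le_sum (f := fun j ↦ B i j ^ 2) (fun j _ ↦ sq_nonneg _) (Finset.mem_univ i)

lemma PosSemidef.trace_mul_self_le_sq_trace {B : Matrix n n ℝ} (hB : B.PosSemidef) :
    (B * B).trace ≤ B.trace ^ 2 :=
  calc (B * B).trace = ∑ i, ∑ j, B i j ^ 2 := by
        simp only [trace, diag_apply, hB.1.mul_self_apply_self]
    _ ≤ ∑ i, ∑ j, B i i * B j j := by
        gcongr with i _ j _
        exact hB.sq_apply_le_mul_apply i j
    _ = B.trace ^ 2 := by rw [sq, trace, Finset.sum_mul_sum]; rfl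

variable [DecidableEq n] {S : Matrix n n ℝ}

lemma PosSemidef.sqrt_trace_le_trace_sqrt (hS : S.PosSemidef) :
    √S.trace ≤ (CFC.sqrt S).trace := by
  have hB : (CFC.sqrt S).PosSemidef := nonneg_iff_posSemidef.1 (CFC.sqrt_nonneg S)
  rw [Real.sqrt_le_iff]
  refine ⟨hB.trace_nonneg, ?_⟩
  calc S.trace = (CFC.sqrt S * CFC.sqrt S).trace := by rw [CFC.sqrt_mul_sqrt_self S hS.nonneg]
    _ ≤ _ := hB.trace_mul_self_le_sq_trace

lemma PosSemidef.trace_sqrt_le_sum_sqrt_diag (hS : S.PosSemidef) :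
    (CFC.sqrt S).trace ≤ ∑ i, √(S i i) := by
  have hB : (CFC.sqrt S).PosSemidef := nonneg_iff_posSemidef.1 (CFC.sqrt_nonneg S)
  refine Finset.sum_le_sum fun i _ ↦ (Real.le_sqrt hB.diag_nonneg hS.diag_nonneg).2 ?_
  conv_rhs => rw [← CFC.sqrt_mul_sqrt_self S hS.nonneg]
  exact hB.1.sq_apply_le_mul_self_apply i

end Matrix

open Matrix

theorem traceNorm_eq_trace_sqrt {n p : ℕ} (M : Matrix (Fin n) (Fin p) ℝ) :
    traceNorm M = (CFC.sqrt (Mᴴ * M)).trace := by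
  have hS := posSemidef_conjTranspose_mul_self M
  rw [CFC.sqrt_eq_real_sqrt _ hS.nonneg, cfcₙ_eq_cfc, hS.1.cfc_eq]
  -- `RCLike.ofReal : ℝ → ℝ` is definitionally the identity
  rfl

theorem trace_lasso_between_l2_l1 {k p : ℕ} (P : Matrix (Fin k) (Fin p) ℝ)
    (hP : ∀ i : Fin p, ∑ j, P j i ^ 2 = 1) (w : Fin p → ℝ) :
    Real.sqrt (∑ i, w i ^ 2) ≤ traceNorm (P * Matrix.diagonal w) ∧
      traceNorm (P * Matrix.diagonal w) ≤ ∑ i, |w i| := by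
  set M := P * diagonal w
  have hS : (Mᴴ * M).PosSemidef := posSemidef_conjTranspose_mul_self M
  have hdiag : ∀ i, (Mᴴ * M) i i = w i ^ 2 := fun i ↦ by
    simp only [M, conjTranspose_mul_self_apply_self, mul_diagonal, mul_pow, ← Finset.sum_mul,
      hP, one_mul]
  rw [traceNorm_eq_trace_sqrt]
  constructor
  · calc √(∑ i, w i ^ 2) = √(Mᴴ * M).trace := by simp only [trace, diag_apply, hdiag]
      _ ≤ _ := hS.sqrt_trace_le_trace_sqrt
  · calc _ ≤ ∑ i, √((Mᴴ * M) i i) := hS.trace_sqrt_le_sum_sqrt_diag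
      _ = ∑ i, |w i| := by simp only [hdiag, Real.sqrt_sq_eq_abs]
end

section
/- Let P ∈ R^{k×p} have columns of unit ℓ2-norm. Then for all u ∈ R^p, the dual norm of Ω_P(w) = ‖P·Diag(w)‖_* satisfies ‖u‖_∞ ≤ Ω_P*(u) ≤ ‖P‖_{op}·‖u‖_∞. -/
noncomputable def opNorm {k p : ℕ} (M : Matrix (Fin k) (Fin p) ℝ) : ℝ :=
  ‖LinearMap.toContinuousLinearMap (Matrix.toEuclideanLin M)‖

/-! For `Ω(v) = traceNorm (P * diagonal v)`, unit columns give
`trace ((P * diagonal v)ᴴ * (P * diagonal u)) = ∑ i, u i * v i`. The trace-norm/operator-norm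
Hölder inequality `trace (Aᴴ * B) ≤ traceNorm A * ‖B‖`, read off in an eigenbasis of `Aᴴ * A`,
then bounds every pairing with `Ω(v) ≤ 1` by `‖P * diagonal u‖ ≤ ‖P‖ * ‖u‖_∞`. Conversely
`v = sign (u i) • eᵢ` has `Ω(v) = |sign (u i)| ≤ 1` and pairs with `u` to `|u i|`. -/

open Matrix
open scoped InnerProductSpace Matrix.Norms.L2Operator MatrixOrder

theorem Matrix.trace_eq_sum_inner {n : Type*} [Fintype n] [DecidableEq n]
    (M : Matrix n n ℝ) (b : OrthonormalBasis n ℝ (EuclideanSpace ℝ n)) :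
    M.trace = ∑ i, ⟪b i, toEuclideanLin M (b i)⟫_ℝ := by
  rw [← LinearMap.trace_eq_sum_inner,
    LinearMap.trace_eq_matrix_trace ℝ (EuclideanSpace.basisFun n ℝ).toBasis]
  congr 1
  ext i j
  simp [LinearMap.toMatrix_apply]

theorem Matrix.conjTranspose_mul_self_apply_self_s11 {m n : Type*} [Fintype m]
    (P : Matrix m n ℝ) (i : n) : (Pᴴ * P) i i = ∑ j, P j i ^ 2 := by
  simp [mul_apply, sq]

theorem Matrix.norm_toEuclideanLin_eigenvectorBasis {m n : Type*} [Fintype m] [Fintype n]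
    [DecidableEq m] [DecidableEq n] (A : Matrix m n ℝ) (i : n) :
    ‖toEuclideanLin A ((posSemidef_conjTranspose_mul_self A).1.eigenvectorBasis i)‖ =
      √((posSemidef_conjTranspose_mul_self A).1.eigenvalues i) := by
  set hH := (posSemidef_conjTranspose_mul_self A).1
  have hw : toEuclideanLin (Aᴴ * A) (hH.eigenvectorBasis i) =
      hH.eigenvalues i • hH.eigenvectorBasis i := by
    rw [toLpLin_apply, hH.mulVec_eigenvectorBasis]
    rfl
  rw [← Real.sqrt_sq (norm_nonneg _), ← real_inner_self_eq_norm_sq,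
    ← LinearMap.adjoint_inner_right, ← toEuclideanLin_conjTranspose_eq_adjoint,
    ← LinearMap.comp_apply, ← toLpLin_mul, hw, real_inner_smul_right,
    real_inner_self_eq_norm_sq, hH.eigenvectorBasis.orthonormal.1 i, one_pow, mul_one]

theorem Matrix.cfc_sqrt_mul_self {n : Type*} [Fintype n] [DecidableEq n]
    {B : Matrix n n ℝ} (hB : B.PosSemidef) : cfc Real.sqrt (B * B) = B := by
  have hBB : 0 ≤ B * B := by
    simpa only [star_eq_conjTranspose, hB.1.eq] using star_mul_self_nonneg B
  conv_rhs => rw [← CFC.sqrt_mul_self B hB.nonneg]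
  rw [CFC.sqrt_eq_cfc, cfc_nnreal_eq_real _ _ hBB]
  congr 1 with x
  rw [Real.sqrt]

theorem norm_le_iSup_abs {ι : Type*} [Fintype ι] (u : ι → ℝ) : ‖u‖ ≤ ⨆ i, |u i| :=
  (pi_norm_le_iff_of_nonneg (Real.iSup_nonneg fun _ => abs_nonneg _)).2 fun i =>
    (Real.norm_eq_abs _).trans_le <| le_ciSup (f := fun i => |u i|) (Set.finite_range _).bddAbove i

theorem abs_sign_le_one (x : ℝ) : |(SignType.sign x : ℝ)| ≤ 1 := by
  rcases SignType.trichotomy (SignType.sign x) with h | h | h <;> simp [h]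

theorem opNorm_eq_l2_opNorm {k p : ℕ} (M : Matrix (Fin k) (Fin p) ℝ) : opNorm M = ‖M‖ := rfl

theorem traceNorm_eq_sum_sqrt_eigenvalues {n p : ℕ} (M : Matrix (Fin n) (Fin p) ℝ) :
    traceNorm M = ∑ i, √((posSemidef_conjTranspose_mul_self M).1.eigenvalues i) := by
  rw [traceNorm, trace_mul_cycle, Unitary.coe_star_mul_self, one_mul, trace_diagonal]
  rfl

theorem traceNorm_eq_trace_cfc_sqrt {n p : ℕ} (M : Matrix (Fin n) (Fin p) ℝ) :
    traceNorm M = (cfc Real.sqrt (Mᴴ * M)).trace := by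
  rw [(posSemidef_conjTranspose_mul_self M).1.cfc_eq, IsHermitian.cfc,
    Unitary.conjStarAlgAut_apply]
  rfl

theorem traceNorm_eq_trace_of_conjTranspose_mul_self_eq {n p : ℕ}
    {M : Matrix (Fin n) (Fin p) ℝ} {B : Matrix (Fin p) (Fin p) ℝ} (hB : B.PosSemidef)
    (hM : Mᴴ * M = B * B) : traceNorm M = B.trace := by
  rw [traceNorm_eq_trace_cfc_sqrt, hM, cfc_sqrt_mul_self hB]

theorem traceNorm_zero {n p : ℕ} : traceNorm (0 : Matrix (Fin n) (Fin p) ℝ) = 0 := by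
  rw [traceNorm_eq_trace_of_conjTranspose_mul_self_eq PosSemidef.zero (by simp), trace_zero]

theorem traceNorm_mul_single {k p : ℕ} {P : Matrix (Fin k) (Fin p) ℝ} {i : Fin p}
    (hi : ∑ j, P j i ^ 2 = 1) (s : ℝ) : traceNorm (P * single i i s) = |s| := by
  have hB : (single i i |s|).PosSemidef := by
    rw [← diagonal_single, posSemidef_diagonal_iff]
    intro j
    rcases eq_or_ne j i with rfl | hj
    · simp
    · simp [hj]
  have hM : (P * single i i s)ᴴ * (P * single i i s) = single i i |s| * single i i |s| := by
    rw [conjTranspose_mul, conjTranspose_single, star_trivial, single_mul_single_same,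
      abs_mul_abs_self, ← Matrix.mul_assoc, Matrix.mul_assoc (single i i s) Pᴴ P,
      single_mul_mul_single, conjTranspose_mul_self_apply_self_s11, hi, mul_one]
  rw [traceNorm_eq_trace_of_conjTranspose_mul_self_eq hB hM, trace_single_eq_same]

theorem trace_conjTranspose_mul_le_traceNorm_mul_norm {k p : ℕ}
    (A B : Matrix (Fin k) (Fin p) ℝ) : (Aᴴ * B).trace ≤ traceNorm A * ‖B‖ := by
  set w := (posSemidef_conjTranspose_mul_self A).1.eigenvectorBasis
  rw [trace_eq_sum_inner _ w, traceNorm_eq_sum_sqrt_eigenvalues, Finset.sum_mul]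
  refine Finset.sum_le_sum fun i _ => ?_
  calc ⟪w i, toEuclideanLin (Aᴴ * B) (w i)⟫_ℝ
      = ⟪toEuclideanLin A (w i), toEuclideanLin B (w i)⟫_ℝ := by
        rw [toLpLin_mul, LinearMap.comp_apply, toEuclideanLin_conjTranspose_eq_adjoint,
          LinearMap.adjoint_inner_right]
    _ ≤ ‖toEuclideanLin A (w i)‖ * ‖toEuclideanLin B (w i)‖ := real_inner_le_norm _ _
    _ ≤ _ := by
        rw [norm_toEuclideanLin_eigenvectorBasis]
        gcongr
        exact (l2_opNorm_mulVec B (w i)).trans_eq (by rw [w.orthonormal.1 i, mul_one])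

theorem Matrix.trace_conjTranspose_mul_diagonal_mul_diagonal {m n : Type*} [Fintype m]
    [Fintype n] [DecidableEq n] {P : Matrix m n ℝ} (hP : ∀ i, ∑ j, P j i ^ 2 = 1)
    (u v : n → ℝ) :
    ((P * diagonal v)ᴴ * (P * diagonal u)).trace = ∑ i, u i * v i := by
  rw [conjTranspose_mul, diagonal_conjTranspose, star_trivial, ← Matrix.mul_assoc,
    Matrix.mul_assoc (diagonal v) Pᴴ P, trace, Finset.sum_congr rfl]
  intro i _
  rw [diag_apply, mul_diagonal, diagonal_mul, conjTranspose_mul_self_apply_self_s11, hP, mul_one,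
    mul_comm]

theorem dual_norm_linf_bounds {k p : ℕ} (P : Matrix (Fin k) (Fin p) ℝ)
    (hP : ∀ i : Fin p, ∑ j, P j i ^ 2 = 1) (u : Fin p → ℝ) :
    (⨆ i, |u i|) ≤
        sSup {x : ℝ | ∃ v : Fin p → ℝ,
          traceNorm (P * Matrix.diagonal v) ≤ 1 ∧ x = ∑ i, u i * v i} ∧
      sSup {x : ℝ | ∃ v : Fin p → ℝ,
          traceNorm (P * Matrix.diagonal v) ≤ 1 ∧ x = ∑ i, u i * v i} ≤
        opNorm P * ⨆ i, |u i| := by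
  set S := {x : ℝ | ∃ v : Fin p → ℝ,
    traceNorm (P * Matrix.diagonal v) ≤ 1 ∧ x = ∑ i, u i * v i}
  have hS : ∀ x ∈ S, x ≤ opNorm P * ⨆ i, |u i| := by
    rintro _ ⟨v, hv, rfl⟩
    calc ∑ i, u i * v i = ((P * diagonal v)ᴴ * (P * diagonal u)).trace :=
          (trace_conjTranspose_mul_diagonal_mul_diagonal hP u v).symm
      _ ≤ traceNorm (P * diagonal v) * ‖P * diagonal u‖ :=
          trace_conjTranspose_mul_le_traceNorm_mul_norm _ _
      _ ≤ 1 * (‖P‖ * ‖diagonal u‖) := by gcongr; exact l2_opNorm_mul _ _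
      _ ≤ opNorm P * ⨆ i, |u i| := by
          rw [one_mul, l2_opNorm_diagonal, opNorm_eq_l2_opNorm]
          gcongr
          exact norm_le_iSup_abs u
  have hzero : (0 : ℝ) ∈ S := ⟨0, by simp [traceNorm_zero], by simp⟩
  have habs : ∀ i, |u i| ∈ S := fun i => by
    refine ⟨Pi.single i (SignType.sign (u i) : ℝ), ?_, ?_⟩
    · rw [diagonal_single, traceNorm_mul_single (hP i)]
      exact abs_sign_le_one (u i)
    · rw [← self_mul_sign]
      exact (dotProduct_single u _ i).symm
  have hbdd : BddAbove S := ⟨_, hS⟩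
  exact ⟨Real.iSup_le (fun i => le_csSup hbdd (habs i)) (le_csSup hbdd hzero),
    csSup_le ⟨0, hzero⟩ hS⟩
end
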